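/- arXiv:2406.04192 — 4 statements merged into one kernel-verified Lean document; each statement's English description precedes it below -/
import Mathlib

section
/- Let N ≥ 1, let F_1, …, F_N : ℝ^d → ℝ be functions, let E ⊆ {1,…,N}² be a graph, and let E' ⊆ {1,…,N}² be any graph satisfying (a) E ⊆ E' and (b) for all i, j, if Vor_i^E(F) ∩ Vor_j^E(F) ≠ ∅ then (i,j) ∈ E'. Then the cells associated to E' are exactly the Voronoi cells: for every i, Vor_i^{E'}(F) = Vor_i(F). -/
/-- The generalized Voronoi cell of index `i` for functions `F`. -/
def Vor {d N : ℕ} (F : Fin N → EuclideanSpace ℝ (Fin d) → ℝ) (i : Fin N) :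
    Set (EuclideanSpace ℝ (Fin d)) :=
  {x | ∀ j, j ≠ i → F i x ≤ F j x}

/-- The cell of index `i` associated to a graph `E` of oriented edges. -/
def VorE {d N : ℕ} (F : Fin N → EuclideanSpace ℝ (Fin d) → ℝ)
    (E : Set (Fin N × Fin N)) (i : Fin N) : Set (EuclideanSpace ℝ (Fin d)) :=
  ⋂ j ∈ {j : Fin N | (i, j) ∈ E}, {x | F i x ≤ F j x}

/-!
A point `x` of `Vor_i^{E'}` lies in `Vor_i^E` because `E ⊆ E'`, and in the Voronoi cell of
some index `k` minimizing `j ↦ F_j x`, hence in `Vor_k^E`. So `Vor_i^E ∩ Vor_k^E` meets, the edge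
`(i, k)` is in `E'`, and `F_i x ≤ F_k x = min_j F_j x`.
-/

section VoronoiCells

variable {d N : ℕ} {F : Fin N → EuclideanSpace ℝ (Fin d) → ℝ} {E E' : Set (Fin N × Fin N)}
  {i k : Fin N} {x : EuclideanSpace ℝ (Fin d)}

theorem mem_Vor_iff : x ∈ Vor F i ↔ ∀ j, F i x ≤ F j x :=
  ⟨fun hx j => if hji : j = i then hji ▸ le_rfl else hx j hji, fun hx j _ => hx j⟩

@[simp]
theorem mem_VorE : x ∈ VorE F E i ↔ ∀ j, (i, j) ∈ E → F i x ≤ F j x := by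
  simp [VorE]

theorem VorE_anti (hEE' : E ⊆ E') : VorE F E' i ⊆ VorE F E i :=
  fun _ hx => mem_VorE.2 fun j hj => mem_VorE.1 hx j (hEE' hj)

theorem Vor_subset_VorE : Vor F i ⊆ VorE F E i :=
  fun _ hx => mem_VorE.2 fun j _ => mem_Vor_iff.1 hx j

theorem exists_mem_Vor [Nonempty (Fin N)] (x : EuclideanSpace ℝ (Fin d)) :
    ∃ k, x ∈ Vor F k := by
  obtain ⟨k, hk⟩ := Finite.exists_min (F · x)
  exact ⟨k, mem_Vor_iff.2 hk⟩

theorem mem_Vor_of_mem_VorE_of_mem_Vor (hxi : x ∈ VorE F E i) (hxk : x ∈ Vor F k)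
    (hik : (i, k) ∈ E) : x ∈ Vor F i :=
  mem_Vor_iff.2 fun j => (mem_VorE.1 hxi k hik).trans (mem_Vor_iff.1 hxk j)

end VoronoiCells

theorem graph_cells_eq_voronoi_general {d N : ℕ}
    (F : Fin N → EuclideanSpace ℝ (Fin d) → ℝ)
    (E E' : Set (Fin N × Fin N))
    (hEE' : E ⊆ E')
    (hE' : ∀ i j : Fin N, (VorE F E i ∩ VorE F E j).Nonempty → (i, j) ∈ E')
    (i : Fin N) :
    VorE F E' i = Vor F i := by
  refine Set.Subset.antisymm (fun x hx => ?_) Vor_subset_VorE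
  have : Nonempty (Fin N) := ⟨i⟩
  obtain ⟨k, hxk⟩ := exists_mem_Vor (F := F) x
  have hik : (i, k) ∈ E' := hE' i k ⟨x, VorE_anti hEE' hx, Vor_subset_VorE hxk⟩
  exact mem_Vor_of_mem_VorE_of_mem_Vor hx hxk hik

/-- if `E'` contains `E` together with every pair `(i,j)` whose
cells relative to `E` intersect, then the cells relative to `E'` are exactly
the Voronoi cells. -/
theorem graph_cells_eq_voronoi {d N : ℕ} (hN : 1 ≤ N)
    (F : Fin N → EuclideanSpace ℝ (Fin d) → ℝ)
    (E E' : Set (Fin N × Fin N))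
    (hEE' : E ⊆ E')
    (hE' : ∀ i j : Fin N, (VorE F E i ∩ VorE F E j).Nonempty → (i, j) ∈ E')
    (i : Fin N) :
    VorE F E' i = Vor F i :=
  graph_cells_eq_voronoi_general F E E' hEE' hE' i
end

section
/- Let μ be a finite, compactly supported measure on ℝ^d that is absolutely continuous with respect to Lebesgue measure, let x_1, …, x_N ∈ ℝ^d (N ≥ 1) be pairwise distinct, and let ν_1, …, ν_N ∈ ℝ. Then the Kantorovich functional satisfies the supergradient inequality: for all ψ, ψ' ∈ ℝ^N, K(ψ') ≤ K(ψ) + Σ_{i=1}^N (ν_i − μ(Lag_i^ψ)) (ψ'_i − ψ_i). -/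
open MeasureTheory

/-! If `p` lies in the Laguerre cell of `i` for `ψ`, then
`min_j (‖p - x_j‖² - ψ'_j) ≤ min_j (‖p - x_j‖² - ψ_j) + (ψ_i - ψ'_i)`.
For distinct sites two cells meet only inside a hyperplane, which is μ-null since `μ ≪ volume`,
so the cells partition μ-almost all of space, and integrating the pointwise inequality against
this partition gives the supergradient inequality. -/

/-- The Laguerre cell of index `i` for sites `x` and weights `ψ`. -/
def Lag {d N : ℕ} (x : Fin N → EuclideanSpace ℝ (Fin d)) (ψ : Fin N → ℝ) (i : Fin N) :
    Set (EuclideanSpace ℝ (Fin d)) :=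
  {p | ∀ j, j ≠ i → ‖p - x i‖ ^ 2 - ψ i ≤ ‖p - x j‖ ^ 2 - ψ j}

/-- The semi-discrete Kantorovich dual functional. -/
noncomputable def Kfun {d N : ℕ} (μ : Measure (EuclideanSpace ℝ (Fin d)))
    (x : Fin N → EuclideanSpace ℝ (Fin d)) (ν : Fin N → ℝ) (ψ : Fin N → ℝ) : ℝ :=
  (∫ p, (⨅ i : Fin N, (‖p - x i‖ ^ 2 - ψ i)) ∂μ) + ∑ i : Fin N, ψ i * ν i

theorem continuous_iInf_of_finite {X ι L : Type*} [TopologicalSpace X] [Fintype ι] [Nonempty ι]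
    [ConditionallyCompleteLinearOrder L] [TopologicalSpace L] [OrderClosedTopology L]
    {f : ι → X → L} (hf : ∀ i, Continuous (f i)) : Continuous fun p => ⨅ i, f i p := by
  simp_rw [← Finset.inf'_univ_eq_ciInf]
  exact Continuous.finset_inf'_apply Finset.univ_nonempty fun i _ => hf i

theorem ContinuousOn.integrable_of_ae_mem {X E : Type*} [TopologicalSpace X] [T2Space X]
    [MeasurableSpace X] [OpensMeasurableSpace X] [NormedAddCommGroup E] {μ : Measure X}
    [IsFiniteMeasureOnCompacts μ] {K : Set X} {f : X → E} (hf : ContinuousOn f K)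
    (hK : IsCompact K) (hμK : ∀ᵐ p ∂μ, p ∈ K) : Integrable f μ := by
  rw [← Measure.restrict_eq_self_of_ae_mem hμK]
  exact hf.integrableOn_compact hK

section Hyperplane

variable {E : Type*} [NormedAddCommGroup E] [MeasurableSpace E] [BorelSpace E]

theorem addHaar_preimage_singleton_of_ne_zero [NormedSpace ℝ E] [FiniteDimensional ℝ E]
    (μ : Measure E) [μ.IsAddHaarMeasure] {ℓ : E →ₗ[ℝ] ℝ} (hℓ : ℓ ≠ 0) (c : ℝ) :
    μ (ℓ ⁻¹' {c}) = 0 := by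
  obtain ⟨p₀, rfl⟩ := LinearMap.surjective_of_ne_zero hℓ c
  have hpre : ℓ ⁻¹' {ℓ p₀} = (· + -p₀) ⁻¹' (LinearMap.ker ℓ : Set E) := by
    ext p
    simp [← sub_eq_add_neg, sub_eq_zero]
  rw [hpre, measure_preimage_add_right]
  exact Measure.addHaar_submodule μ _ (mt LinearMap.ker_eq_top.1 hℓ)

/-- The points where two shifted squared distances agree lie on a hyperplane orthogonal
to `b - a`. -/
theorem addHaar_setOf_norm_sub_sq_sub_eq [InnerProductSpace ℝ E] [FiniteDimensional ℝ E]
    (μ : Measure E) [μ.IsAddHaarMeasure] {a b : E} (hab : a ≠ b) (s t : ℝ) :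
    μ {p | ‖p - a‖ ^ 2 - s = ‖p - b‖ ^ 2 - t} = 0 := by
  have hℓ : innerₛₗ ℝ (b - a) ≠ 0 := fun h => by
    have h' := LinearMap.congr_fun h (b - a)
    rw [coe_innerₛₗ_apply, LinearMap.zero_apply, inner_self_eq_zero, sub_eq_zero] at h'
    exact hab h'.symm
  refine measure_mono_null (fun p hp => ?_)
    (addHaar_preimage_singleton_of_ne_zero μ hℓ ((‖b‖ ^ 2 - ‖a‖ ^ 2 + s - t) / 2))
  change ‖p - a‖ ^ 2 - s = ‖p - b‖ ^ 2 - t at hp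
  change inner ℝ (b - a) p = _
  rw [norm_sub_sq_real, norm_sub_sq_real] at hp
  rw [inner_sub_left, real_inner_comm p b, real_inner_comm p a]
  linarith

end Hyperplane

section MinimizingCell

variable {α ι : Type*}

def minimizingCell (f : ι → α → ℝ) (i : ι) : Set α :=
  {p | ∀ j, f i p ≤ f j p}

variable {f : ι → α → ℝ}

theorem exists_mem_minimizingCell [Finite ι] [Nonempty ι] (p : α) :
    ∃ i, p ∈ minimizingCell f i := by
  obtain ⟨i, hi⟩ := Finite.exists_min (f · p)
  exact ⟨i, hi⟩

theorem iInf_eq_of_mem_minimizingCell [Finite ι] {i : ι} {p : α}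
    (hp : p ∈ minimizingCell f i) : ⨅ j, f j p = f i p :=
  have : Nonempty ι := ⟨i⟩
  le_antisymm (ciInf_le (Finite.bddBelow_range _) i) (le_ciInf hp)

theorem iInf_sub_le_of_mem_minimizingCell [Finite ι] (δ : ι → ℝ) {i : ι} {p : α}
    (hp : p ∈ minimizingCell f i) : ⨅ j, (f j p - δ j) ≤ (⨅ j, f j p) - δ i := by
  rw [iInf_eq_of_mem_minimizingCell hp]
  exact ciInf_le (Finite.bddBelow_range _) i

theorem minimizingCell_inter_subset (i j : ι) :
    minimizingCell f i ∩ minimizingCell f j ⊆ {p | f i p = f j p} :=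
  fun _ hp => le_antisymm (hp.1 j) (hp.2 i)

variable [MeasurableSpace α]

theorem measurableSet_minimizingCell [Countable ι] (hf : ∀ i, Measurable (f i)) (i : ι) :
    MeasurableSet (minimizingCell f i) := by
  simp only [minimizingCell, Set.ofPred_forall]
  exact MeasurableSet.iInter fun j => measurableSet_le (hf i) (hf j)

variable {μ : Measure α}

theorem ae_mem_minimizingCell_unique [Countable ι]
    (hnull : Pairwise fun i j => μ (minimizingCell f i ∩ minimizingCell f j) = 0) :
    ∀ᵐ p ∂μ, ∀ i j, p ∈ minimizingCell f i → p ∈ minimizingCell f j → i = j := by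
  refine ae_all_iff.2 fun i => ae_all_iff.2 fun j => ?_
  by_cases hij : i = j
  · exact Filter.Eventually.of_forall fun _ _ _ => hij
  · filter_upwards [measure_eq_zero_iff_ae_notMem.1 (hnull hij)] with p hp hi hj
    exact absurd ⟨hi, hj⟩ hp

theorem integral_iInf_sub_le [Fintype ι] [Nonempty ι] [IsFiniteMeasure μ]
    (hf : ∀ i, Measurable (f i))
    (hnull : Pairwise fun i j => μ (minimizingCell f i ∩ minimizingCell f j) = 0)
    (δ : ι → ℝ) (hint : Integrable (fun p => ⨅ j, f j p) μ)
    (hint' : Integrable (fun p => ⨅ j, (f j p - δ j)) μ) :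
    ∫ p, ⨅ j, (f j p - δ j) ∂μ ≤
      ∫ p, ⨅ j, f j p ∂μ - ∑ i, δ i * μ.real (minimizingCell f i) := by
  set g : α → ℝ := fun p => ∑ i, (minimizingCell f i).indicator (fun _ => δ i) p
  have hind_int : ∀ i, Integrable ((minimizingCell f i).indicator fun _ => δ i) μ := fun i =>
    (integrable_const _).indicator (measurableSet_minimizingCell hf i)
  have hg_int : Integrable g μ := integrable_finsetSum _ fun i _ => hind_int i
  have hg : ∫ p, g p ∂μ = ∑ i, δ i * μ.real (minimizingCell f i) := by
    rw [integral_finsetSum _ fun i _ => hind_int i]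
    refine Finset.sum_congr rfl fun i _ => ?_
    rw [integral_indicator_const _ (measurableSet_minimizingCell hf i), smul_eq_mul, mul_comm]
  have hbound : ∀ᵐ p ∂μ, ⨅ j, (f j p - δ j) ≤ (⨅ j, f j p) - g p := by
    filter_upwards [ae_mem_minimizingCell_unique hnull] with p hp
    obtain ⟨i, hi⟩ := exists_mem_minimizingCell (f := f) p
    have hgi : g p = δ i := by
      refine (Finset.sum_eq_single i (fun j _ hji => ?_) (by simp)).trans ?_
      · exact Set.indicator_of_notMem (fun hj => hji (hp j i hj hi)) _
      · exact Set.indicator_of_mem hi _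
    rw [hgi]
    exact iInf_sub_le_of_mem_minimizingCell δ hi
  calc ∫ p, ⨅ j, (f j p - δ j) ∂μ ≤ ∫ p, ((⨅ j, f j p) - g p) ∂μ :=
        integral_mono_ae hint' (hint.sub hg_int) hbound
    _ = _ := by rw [integral_sub hint hg_int, hg]

end MinimizingCell

theorem Lag_eq_minimizingCell {d N : ℕ} (x : Fin N → EuclideanSpace ℝ (Fin d)) (ψ : Fin N → ℝ)
    (i : Fin N) : Lag x ψ i = minimizingCell (fun j p => ‖p - x j‖ ^ 2 - ψ j) i := by
  ext p
  refine ⟨fun hp j => ?_, fun hp j _ => hp j⟩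
  rcases eq_or_ne j i with rfl | hji
  · exact le_rfl
  · exact hp j hji

/-- the supergradient inequality for the Kantorovich functional,
with supergradient `(ν_i − μ(Lag_i^ψ))_i`. -/
theorem kantorovich_supergradient {d N : ℕ} (hN : 1 ≤ N)
    (μ : Measure (EuclideanSpace ℝ (Fin d))) [IsFiniteMeasure μ]
    (hsupp : ∃ K : Set (EuclideanSpace ℝ (Fin d)), IsCompact K ∧ μ Kᶜ = 0)
    (hac : μ ≪ volume)
    (x : Fin N → EuclideanSpace ℝ (Fin d)) (hx : Function.Injective x)
    (ν : Fin N → ℝ) (ψ ψ' : Fin N → ℝ) :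
    Kfun μ x ν ψ' ≤ Kfun μ x ν ψ +
      ∑ i : Fin N, (ν i - (μ (Lag x ψ i)).toReal) * (ψ' i - ψ i) := by
  have : Nonempty (Fin N) := Fin.pos_iff_nonempty.mp hN
  obtain ⟨K, hK, hμK⟩ := hsupp
  set f : Fin N → EuclideanSpace ℝ (Fin d) → ℝ := fun j p => ‖p - x j‖ ^ 2 - ψ j
  have hint (φ : Fin N → ℝ) : Integrable (fun p => ⨅ j, (‖p - x j‖ ^ 2 - φ j)) μ :=
    (continuous_iInf_of_finite fun j => by fun_prop).continuousOn.integrable_of_ae_mem hK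
      (mem_ae_iff.mpr hμK)
  have hnull : Pairwise fun i j => μ (minimizingCell f i ∩ minimizingCell f j) = 0 :=
    fun i j hij => hac (measure_mono_null (minimizingCell_inter_subset i j)
      (addHaar_setOf_norm_sub_sq_sub_eq volume (hx.ne hij) _ _))
  have key := integral_iInf_sub_le (fun j => by fun_prop) hnull (ψ' - ψ) (hint ψ)
    (by simpa only [f, Pi.sub_apply, sub_sub_sub_cancel_right] using hint ψ')
  simp only [f, Pi.sub_apply, sub_sub_sub_cancel_right, ← Lag_eq_minimizingCell,
    measureReal_def] at key
  have hsum : ∑ i, (ν i - (μ (Lag x ψ i)).toReal) * (ψ' i - ψ i) =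
      ∑ i, ψ' i * ν i - ∑ i, ψ i * ν i - ∑ i, (ψ' i - ψ i) * (μ (Lag x ψ i)).toReal := by
    simp only [← Finset.sum_sub_distrib]
    exact Finset.sum_congr rfl fun i _ => by ring
  rw [Kfun, Kfun, hsum]
  linarith
end

section
/- Let μ be a finite, compactly supported measure on ℝ^d that is absolutely continuous with respect to Lebesgue measure, let x_1, …, x_N ∈ ℝ^d (N ≥ 1) be pairwise distinct, and let ν_1, …, ν_N ∈ ℝ. If ψ ∈ ℝ^N satisfies μ(Lag_i^ψ) = ν_i for every i, then ψ is a global maximizer of the Kantorovich functional: K(ψ') ≤ K(ψ) for all ψ' ∈ ℝ^N. -/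
open MeasureTheory

/-!
`K` is concave and `ν - (μ(Lag_i^ψ))_i` is a supergradient of it at `ψ`. Pointwise: if `p` lies
in `Lag_i^ψ`, then `min_j (‖p - x_j‖² - ψ'_j) ≤ min_j (‖p - x_j‖² - ψ_j) + ψ_i - ψ'_i`.
Two distinct cells meet only inside a hyperplane, which is `μ`-null since `μ ≪ volume`, so
almost every point lies in exactly one cell, and integrating the pointwise inequality gives
`K(ψ') ≤ K(ψ) + ∑_i (ψ_i - ψ'_i) (μ(Lag_i^ψ) - ν_i) = K(ψ)`.
-/

open scoped InnerProductSpace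

theorem MeasureTheory.Measure.addHaar_inner_eq {E : Type*} [NormedAddCommGroup E]
    [InnerProductSpace ℝ E] [FiniteDimensional ℝ E] [MeasurableSpace E] [BorelSpace E]
    (μ : Measure E) [μ.IsAddHaarMeasure] {v : E} (hv : v ≠ 0) (c : ℝ) :
    μ {p | ⟪v, p⟫_ℝ = c} = 0 := by
  set p₀ : E := (c / ‖v‖ ^ 2) • v
  have hp₀ : ⟪v, p₀⟫_ℝ = c := by
    rw [real_inner_smul_right, real_inner_self_eq_norm_sq]
    field_simp
  have hker : LinearMap.ker (innerₛₗ ℝ v) ≠ ⊤ := fun h => hv <| inner_self_eq_zero.mp <|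
    LinearMap.mem_ker.mp (h ▸ Submodule.mem_top : v ∈ LinearMap.ker (innerₛₗ ℝ v))
  have hset : {p | ⟪v, p⟫_ℝ = c} = (· + -p₀) ⁻¹' (LinearMap.ker (innerₛₗ ℝ v) : Set E) := by
    ext p
    simp [inner_add_right, hp₀, add_neg_eq_zero]
  rw [hset, measure_preimage_add_right, Measure.addHaar_submodule μ _ hker]

theorem Continuous.iInf_of_finite {X ι L : Type*} [TopologicalSpace X] [Finite ι]
    [ConditionallyCompleteLinearOrder L] [TopologicalSpace L] [OrderClosedTopology L]
    {f : ι → X → L} (hf : ∀ i, Continuous (f i)) : Continuous fun p => ⨅ i, f i p := by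
  rcases isEmpty_or_nonempty ι with hι | hι
  · simpa only [iInf_of_isEmpty] using continuous_const
  · have := Fintype.ofFinite ι
    simp_rw [← Finset.inf'_univ_eq_ciInf]
    exact Continuous.finset_inf'_apply _ fun i _ => hf i

theorem Continuous.integrable_of_measure_compl_eq_zero {X : Type*} [TopologicalSpace X]
    [T2Space X] [MeasurableSpace X] [OpensMeasurableSpace X] {μ : Measure X}
    [IsFiniteMeasureOnCompacts μ] {K : Set X} (hK : IsCompact K) (hKc : μ Kᶜ = 0) {f : X → ℝ}
    (hf : Continuous f) : Integrable f μ := by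
  have := hf.continuousOn.integrableOn_compact (μ := μ) hK
  rwa [IntegrableOn, Measure.restrict_eq_self_of_ae_mem (mem_ae_iff.mpr hKc)] at this

section Laguerre

variable {d N : ℕ} {x : Fin N → EuclideanSpace ℝ (Fin d)} {ψ : Fin N → ℝ}

theorem mem_Lag_iff {p : EuclideanSpace ℝ (Fin d)} {i : Fin N} :
    p ∈ Lag x ψ i ↔ ∀ j, ‖p - x i‖ ^ 2 - ψ i ≤ ‖p - x j‖ ^ 2 - ψ j :=
  ⟨fun h j => (eq_or_ne j i).elim (fun hji => hji ▸ le_rfl) (h j), fun h j _ => h j⟩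

theorem isClosed_Lag (x : Fin N → EuclideanSpace ℝ (Fin d)) (ψ : Fin N → ℝ) (i : Fin N) :
    IsClosed (Lag x ψ i) := by
  simp only [Lag, Set.ofPred_forall]
  exact isClosed_iInter fun j => isClosed_iInter fun _ => isClosed_le (by fun_prop) (by fun_prop)

theorem exists_mem_Lag [Nonempty (Fin N)] (x : Fin N → EuclideanSpace ℝ (Fin d))
    (ψ : Fin N → ℝ) (p : EuclideanSpace ℝ (Fin d)) : ∃ i, p ∈ Lag x ψ i :=
  (Finite.exists_min fun i => ‖p - x i‖ ^ 2 - ψ i).imp fun _ hi => mem_Lag_iff.mpr hi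

theorem iInf_eq_of_mem_Lag {p : EuclideanSpace ℝ (Fin d)} {i : Fin N} (hp : p ∈ Lag x ψ i) :
    ⨅ j, (‖p - x j‖ ^ 2 - ψ j) = ‖p - x i‖ ^ 2 - ψ i :=
  have : Nonempty (Fin N) := ⟨i⟩
  le_antisymm (ciInf_le (Finite.bddBelow_range _) i) (le_ciInf (mem_Lag_iff.mp hp))

theorem Lag_inter_Lag_subset (i j : Fin N) :
    Lag x ψ i ∩ Lag x ψ j ⊆
      {p | ⟪(2 : ℝ) • (x j - x i), p⟫_ℝ = ‖x j‖ ^ 2 - ‖x i‖ ^ 2 + ψ i - ψ j} := by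
  rintro p ⟨hpi, hpj⟩
  have heq := le_antisymm (mem_Lag_iff.mp hpi j) (mem_Lag_iff.mp hpj i)
  rw [norm_sub_sq_real, norm_sub_sq_real] at heq
  simp only [Set.mem_ofPred_eq, real_inner_smul_left, inner_sub_left, real_inner_comm p]
  linarith

theorem measure_Lag_inter_Lag_eq_zero {μ : Measure (EuclideanSpace ℝ (Fin d))}
    (hac : μ ≪ volume) (hx : Function.Injective x) {i j : Fin N} (hij : i ≠ j) :
    μ (Lag x ψ i ∩ Lag x ψ j) = 0 := by
  have hv : (2 : ℝ) • (x j - x i) ≠ 0 :=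
    smul_ne_zero two_ne_zero (sub_ne_zero.mpr (hx.ne hij.symm))
  exact hac (measure_mono_null (Lag_inter_Lag_subset i j) (Measure.addHaar_inner_eq _ hv _))

theorem ae_eq_of_mem_Lag_of_mem_Lag {μ : Measure (EuclideanSpace ℝ (Fin d))}
    (hac : μ ≪ volume) (hx : Function.Injective x) :
    ∀ᵐ p ∂μ, ∀ i j, p ∈ Lag x ψ i → p ∈ Lag x ψ j → i = j := by
  simp only [ae_all_iff]
  intro i j
  by_cases hij : i = j
  · exact Filter.Eventually.of_forall fun _ _ _ => hij
  · filter_upwards [measure_eq_zero_iff_ae_notMem.mp (measure_Lag_inter_Lag_eq_zero hac hx hij)]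
      with p hp hpi hpj using absurd ⟨hpi, hpj⟩ hp

theorem iInf_le_iInf_add_sum_indicator_Lag (ψ' : Fin N → ℝ) {p : EuclideanSpace ℝ (Fin d)}
    (hp : ∀ i j, p ∈ Lag x ψ i → p ∈ Lag x ψ j → i = j) :
    ⨅ i, (‖p - x i‖ ^ 2 - ψ' i) ≤
      (⨅ i, (‖p - x i‖ ^ 2 - ψ i)) + ∑ j, (Lag x ψ j).indicator (fun _ => ψ j - ψ' j) p := by
  rcases isEmpty_or_nonempty (Fin N) with hN | hN
  · simp
  obtain ⟨i, hi⟩ := exists_mem_Lag x ψ p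
  have hsum : ∑ j, (Lag x ψ j).indicator (fun _ => ψ j - ψ' j) p = ψ i - ψ' i := by
    rw [Finset.sum_eq_single_of_mem i (Finset.mem_univ i) fun j _ hji =>
      Set.indicator_of_notMem (fun hj => hji (hp j i hj hi)) _, Set.indicator_of_mem hi]
  rw [iInf_eq_of_mem_Lag hi, hsum]
  calc ⨅ j, (‖p - x j‖ ^ 2 - ψ' j) ≤ ‖p - x i‖ ^ 2 - ψ' i := ciInf_le (Finite.bddBelow_range _) i
    _ = ‖p - x i‖ ^ 2 - ψ i + (ψ i - ψ' i) := by ring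

theorem integral_iInf_le_add_sum_measureReal_Lag {μ : Measure (EuclideanSpace ℝ (Fin d))}
    [IsFiniteMeasure μ] (hac : μ ≪ volume) (hx : Function.Injective x) {ψ' : Fin N → ℝ}
    (hψ : Integrable (fun p => ⨅ i, (‖p - x i‖ ^ 2 - ψ i)) μ)
    (hψ' : Integrable (fun p => ⨅ i, (‖p - x i‖ ^ 2 - ψ' i)) μ) :
    ∫ p, ⨅ i, (‖p - x i‖ ^ 2 - ψ' i) ∂μ ≤
      ∫ p, ⨅ i, (‖p - x i‖ ^ 2 - ψ i) ∂μ + ∑ j, (ψ j - ψ' j) * μ.real (Lag x ψ j) := by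
  have hcell (j : Fin N) : Integrable ((Lag x ψ j).indicator fun _ => ψ j - ψ' j) μ :=
    (integrable_const _).indicator (isClosed_Lag x ψ j).measurableSet
  have hcells := integrable_finsetSum Finset.univ fun j _ => hcell j
  have hmono := integral_mono_ae hψ' (hψ.add hcells) <|
    (ae_eq_of_mem_Lag_of_mem_Lag hac hx).mono fun p hp => iInf_le_iInf_add_sum_indicator_Lag ψ' hp
  rw [integral_add' hψ hcells, integral_finsetSum _ fun j _ => hcell j] at hmono
  simpa only [integral_indicator_const _ (isClosed_Lag x ψ _).measurableSet, smul_eq_mul,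
    mul_comm] using hmono

end Laguerre

theorem kantorovich_maximizer_of_masses_general {d N : ℕ}
    (μ : Measure (EuclideanSpace ℝ (Fin d))) [IsFiniteMeasure μ]
    (hsupp : ∃ K : Set (EuclideanSpace ℝ (Fin d)), IsCompact K ∧ μ Kᶜ = 0)
    (hac : μ ≪ volume)
    (x : Fin N → EuclideanSpace ℝ (Fin d)) (hx : Function.Injective x)
    (ν : Fin N → ℝ) (ψ : Fin N → ℝ)
    (hmass : ∀ i : Fin N, (μ (Lag x ψ i)).toReal = ν i) :
    ∀ ψ' : Fin N → ℝ, Kfun μ x ν ψ' ≤ Kfun μ x ν ψ := by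
  intro ψ'
  obtain ⟨K, hK, hKc⟩ := hsupp
  have hint (φ : Fin N → ℝ) : Integrable (fun p => ⨅ i, (‖p - x i‖ ^ 2 - φ i)) μ :=
    (Continuous.iInf_of_finite fun i => by fun_prop).integrable_of_measure_compl_eq_zero hK hKc
  have key := integral_iInf_le_add_sum_measureReal_Lag hac hx (hint ψ) (hint ψ')
  simp only [measureReal_def, hmass] at key
  have hsum : ∑ j, (ψ j - ψ' j) * ν j = ∑ j, ψ j * ν j - ∑ j, ψ' j * ν j := by
    simp only [sub_mul, Finset.sum_sub_distrib]
  rw [Kfun, Kfun]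
  linarith

/-- if the Laguerre cells of `ψ` carry the prescribed masses,
then `ψ` is a global maximizer of the Kantorovich functional. -/
theorem kantorovich_maximizer_of_masses {d N : ℕ} (hN : 1 ≤ N)
    (μ : Measure (EuclideanSpace ℝ (Fin d))) [IsFiniteMeasure μ]
    (hsupp : ∃ K : Set (EuclideanSpace ℝ (Fin d)), IsCompact K ∧ μ Kᶜ = 0)
    (hac : μ ≪ volume)
    (x : Fin N → EuclideanSpace ℝ (Fin d)) (hx : Function.Injective x)
    (ν : Fin N → ℝ) (ψ : Fin N → ℝ)
    (hmass : ∀ i : Fin N, (μ (Lag x ψ i)).toReal = ν i) :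
    ∀ ψ' : Fin N → ℝ, Kfun μ x ν ψ' ≤ Kfun μ x ν ψ :=
  kantorovich_maximizer_of_masses_general μ hsupp hac x hx ν ψ hmass
end

section
/- Let μ be a finite, compactly supported measure on ℝ^d that is absolutely continuous with respect to Lebesgue measure, let x_1, …, x_N ∈ ℝ^d (N ≥ 1) be pairwise distinct, and let ν_1, …, ν_N be strictly positive reals with Σ_{i=1}^N ν_i = μ(ℝ^d). Then the Kantorovich functional K admits at least one global maximizer: there exists ψ* ∈ ℝ^N such that K(ψ) ≤ K(ψ*) for all ψ ∈ ℝ^N. -/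
/-!
The functional is continuous, since its integrand is `1`-Lipschitz in `ψ` for the sup norm. By
the mass balance it does not change when a constant is added to `ψ`, and because every `ν i` is
positive it drops at least linearly in the oscillation `max ψ - min ψ`. So its supremum is already
the supremum over a compact box of nonnegative potentials, where it is attained.
-/

open MeasureTheory

open Set Filter

namespace SemiDiscreteOT

variable {ι : Type*} [Fintype ι]

theorem iInf_le_iInf_add_dist [Nonempty ι] (v w : ι → ℝ) :
    ⨅ i, v i ≤ (⨅ i, w i) + dist v w := by
  rw [← sub_le_iff_le_add]
  refine le_ciInf fun i => ?_
  have hv : ⨅ i, v i ≤ v i := ciInf_le (finite_range v).bddBelow i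
  have hvw : v i - w i ≤ dist v w :=
    (le_abs_self _).trans (Real.dist_eq (v i) (w i) ▸ dist_le_pi_dist v w i)
  linarith

theorem lipschitzWith_iInf [Nonempty ι] : LipschitzWith 1 fun v : ι → ℝ => ⨅ i, v i :=
  LipschitzWith.of_le_add iInf_le_iInf_add_dist

theorem abs_iInf_le_norm [Nonempty ι] (v : ι → ℝ) : |⨅ i, v i| ≤ ‖v‖ := by
  simpa [Real.dist_eq] using lipschitzWith_iInf.dist_le_mul v 0

variable {α : Type*} [MeasurableSpace α] {μ : Measure α} {c : α → ι → ℝ}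

/-- `c p i` is the cost of moving `p` to the `i`-th target point. -/
noncomputable def dualFunctional (μ : Measure α) (c : α → ι → ℝ) (ν ψ : ι → ℝ) : ℝ :=
  (∫ p, ⨅ i, (c p i - ψ i) ∂μ) + ∑ i, ψ i * ν i

variable [IsFiniteMeasure μ]

theorem integrable_iInf_sub [Nonempty ι] (hc : Integrable c μ) (ψ : ι → ℝ) :
    Integrable (fun p => ⨅ i, (c p i - ψ i)) μ := by
  refine (hc.norm.add (integrable_const ‖ψ‖)).mono'
    (lipschitzWith_iInf.continuous.comp_aestronglyMeasurable
      (hc.aestronglyMeasurable.sub aestronglyMeasurable_const)) (Eventually.of_forall fun p => ?_)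
  calc ‖⨅ i, (c p i - ψ i)‖ = |⨅ i, (c p - ψ) i| := rfl
    _ ≤ ‖c p - ψ‖ := abs_iInf_le_norm _
    _ ≤ ‖c p‖ + ‖ψ‖ := norm_sub_le _ _

theorem lipschitzWith_integral_iInf_sub [Nonempty ι] (hc : Integrable c μ) :
    LipschitzWith (μ.real univ).toNNReal fun ψ : ι → ℝ => ∫ p, ⨅ i, (c p i - ψ i) ∂μ := by
  refine LipschitzWith.of_dist_le_mul fun ψ φ => ?_
  rw [dist_eq_norm, ← integral_sub (integrable_iInf_sub hc ψ) (integrable_iInf_sub hc φ),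
    Real.coe_toNNReal _ measureReal_nonneg, mul_comm]
  refine norm_integral_le_of_norm_le_const (Eventually.of_forall fun p => ?_)
  rw [← dist_eq_norm, ← dist_sub_left (c p)]
  have h := lipschitzWith_iInf.dist_le_mul (c p - ψ) (c p - φ)
  rwa [NNReal.coe_one, one_mul] at h

theorem continuous_dualFunctional [Nonempty ι] (hc : Integrable c μ) (ν : ι → ℝ) :
    Continuous (dualFunctional μ c ν) :=
  (lipschitzWith_integral_iInf_sub hc).continuous.add (by fun_prop)

theorem dualFunctional_add_const [Nonempty ι] (hc : Integrable c μ) {ν : ι → ℝ}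
    (hbal : ∑ i, ν i = μ.real univ) (ψ : ι → ℝ) (a : ℝ) :
    dualFunctional μ c ν (fun i => ψ i + a) = dualFunctional μ c ν ψ := by
  have hshift (p : α) : ⨅ i, (c p i - (ψ i + a)) = (⨅ i, (c p i - ψ i)) - a := by
    rw [ciInf_sub (finite_range _).bddBelow]
    simp only [sub_add_eq_sub_sub]
  simp only [dualFunctional, hshift, integral_sub (integrable_iInf_sub hc ψ) (integrable_const a),
    integral_const, smul_eq_mul, add_mul, Finset.sum_add_distrib, ← Finset.mul_sum, hbal]
  ring

theorem dualFunctional_le [Nonempty ι] (hc : Integrable c μ) {ν : ι → ℝ} (hν : ∀ i, 0 ≤ ν i)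
    (hbal : ∑ i, ν i = μ.real univ) {ψ : ι → ℝ} {k : ι} (hk : ∀ i, ψ i ≤ ψ k) (j : ι) :
    dualFunctional μ c ν ψ ≤ (∫ p, ‖c p‖ ∂μ) - (ψ k - ψ j) * ν j := by
  have hint : ∫ p, ⨅ i, (c p i - ψ i) ∂μ ≤ (∫ p, ‖c p‖ ∂μ) - μ.real univ * ψ k := by
    rw [← smul_eq_mul, ← integral_const, ← integral_sub hc.norm (integrable_const _)]
    refine integral_mono (integrable_iInf_sub hc ψ) (hc.norm.sub (integrable_const _)) fun p => ?_
    calc ⨅ i, (c p i - ψ i) ≤ c p k - ψ k := ciInf_le (finite_range _).bddBelow k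
      _ ≤ ‖c p‖ - ψ k := by gcongr; exact (le_abs_self _).trans (norm_le_pi_norm (c p) k)
  have hsum : ∑ i, ψ i * ν i ≤ ψ j * ν j + ψ k * (μ.real univ - ν j) := by
    classical
    rw [← hbal, ← Finset.add_sum_erase _ _ (Finset.mem_univ j),
      ← Finset.sum_erase_eq_sub (Finset.mem_univ j), Finset.mul_sum]
    exact add_le_add_right (Finset.sum_le_sum fun i _ => mul_le_mul_of_nonneg_right (hk i) (hν i)) _
  unfold dualFunctional
  linarith

theorem exists_forall_ge_dualFunctional (hc : Integrable c μ) {ν : ι → ℝ} (hν : ∀ i, 0 < ν i)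
    (hbal : ∑ i, ν i = μ.real univ) :
    ∃ ψstar : ι → ℝ, ∀ ψ, dualFunctional μ c ν ψ ≤ dualFunctional μ c ν ψstar := by
  cases isEmpty_or_nonempty ι
  · exact ⟨0, fun ψ => (congrArg _ (Subsingleton.elim ψ 0)).le⟩
  obtain ⟨j₀, hj₀⟩ := Finite.exists_min ν
  set K := dualFunctional μ c ν
  set C := ∫ p, ‖c p‖ ∂μ
  -- Potentials of oscillation above `R` do worse than `0`, by `dualFunctional_le`.
  set R := max ((C - K 0) / ν j₀) 0
  have h0 : (0 : ι → ℝ) ∈ Icc 0 fun _ => R := ⟨le_rfl, fun _ => le_max_right _ _⟩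
  obtain ⟨ψstar, -, hmax⟩ :=
    isCompact_Icc.exists_isMaxOn ⟨0, h0⟩ (continuous_dualFunctional hc ν).continuousOn
  refine ⟨ψstar, fun ψ => ?_⟩
  obtain ⟨j, hj⟩ := Finite.exists_min ψ
  obtain ⟨k, hk⟩ := Finite.exists_max ψ
  by_cases hR : ψ k - ψ j ≤ R
  · calc K ψ = K fun i => ψ i + -ψ j := (dualFunctional_add_const hc hbal ψ _).symm
      _ ≤ K ψstar := hmax ⟨fun i => show 0 ≤ ψ i + -ψ j by linarith [hj i],
          fun i => show ψ i + -ψ j ≤ R by linarith [hk i]⟩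
  · have hlarge : C - K 0 < (ψ k - ψ j) * ν j₀ :=
      (div_lt_iff₀ (hν j₀)).1 ((le_max_left _ _).trans_lt (not_le.1 hR))
    calc K ψ ≤ C - (ψ k - ψ j) * ν j := dualFunctional_le hc (fun i => (hν i).le) hbal hk j
      _ ≤ C - (ψ k - ψ j) * ν j₀ := by gcongr; exacts [sub_nonneg.2 (hj k), hj₀ j]
      _ ≤ K 0 := by linarith
      _ ≤ K ψstar := hmax h0

end SemiDiscreteOT

open SemiDiscreteOT in
theorem kantorovich_exists_maximizer_general {d N : ℕ}
    (μ : Measure (EuclideanSpace ℝ (Fin d))) [IsFiniteMeasure μ]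
    (hsupp : ∃ K : Set (EuclideanSpace ℝ (Fin d)), IsCompact K ∧ μ Kᶜ = 0)
    (x : Fin N → EuclideanSpace ℝ (Fin d))
    (ν : Fin N → ℝ) (hν : ∀ i, 0 < ν i)
    (hbal : ∑ i : Fin N, ν i = (μ Set.univ).toReal) :
    ∃ ψstar : Fin N → ℝ, ∀ ψ : Fin N → ℝ, Kfun μ x ν ψ ≤ Kfun μ x ν ψstar := by
  obtain ⟨K, hK, hKμ⟩ := hsupp
  have hcost : Continuous fun p (i : Fin N) => ‖p - x i‖ ^ 2 := by fun_prop
  obtain ⟨M, hM⟩ := hK.exists_bound_of_continuousOn hcost.continuousOn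
  have hc : Integrable (fun p (i : Fin N) => ‖p - x i‖ ^ 2) μ :=
    .of_bound hcost.aestronglyMeasurable M (mem_of_superset (mem_ae_iff.2 hKμ) hM)
  exact exists_forall_ge_dualFunctional hc hν hbal

/-- under the mass balance condition, the Kantorovich functional
admits a global maximizer. -/
theorem kantorovich_exists_maximizer {d N : ℕ} (hN : 1 ≤ N)
    (μ : Measure (EuclideanSpace ℝ (Fin d))) [IsFiniteMeasure μ]
    (hsupp : ∃ K : Set (EuclideanSpace ℝ (Fin d)), IsCompact K ∧ μ Kᶜ = 0)
    (hac : μ ≪ volume)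
    (x : Fin N → EuclideanSpace ℝ (Fin d)) (hx : Function.Injective x)
    (ν : Fin N → ℝ) (hν : ∀ i, 0 < ν i)
    (hbal : ∑ i : Fin N, ν i = (μ Set.univ).toReal) :
    ∃ ψstar : Fin N → ℝ, ∀ ψ : Fin N → ℝ, Kfun μ x ν ψ ≤ Kfun μ x ν ψstar :=
  kantorovich_exists_maximizer_general μ hsupp x ν hν hbal
end
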